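/- Let g be a real Lie algebra with inner product ⟨·,·⟩, and let m = m₁ ⊕ m₂ be an orthogonal decomposition of a subspace m ⊆ g with [m₁, m₂] ⊆ m₁ (projections of brackets of m₁ with m₂ lie in m₁). Define the modified inner product ⟨y,z⟩_λ = ⟨y₁,z₁⟩ + λ⟨y₂,z₂⟩ for λ > 0, where y = y₁ + y₂ and z = z₁ + z₂ are the decompositions. Suppose X ∈ m₂ satisfies, for all y,z ∈ m, ⟨[y,X]_m, z⟩ + ⟨[z,X]_m, y⟩ = 0 and ⟨[y,z]_m, X⟩ = 0, and additionally [y₁, X]_m ∈ m₁ for all y₁ ∈ m₁. Then for all y,z ∈ m: ⟨[y,X]_m, z⟩_λ + ⟨[z,X]_m, y⟩_λ = 0 and ⟨[y,z]_m, X⟩_λ = 0. -/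

import Mathlib

open scoped RealInnerProductSpace

/-! Write `⟨y, z⟩_λ = ⟪A y, z⟫` with `A = π₁ + λ π₂` symmetric, and let `D y = [y, X]_m`.
`D` is skew on `m` and preserves `m₁`, so by skewness it also preserves `m₂ = m ⊓ m₁ᗮ`.
Hence `D` commutes with `A` on `m`, and the skewness of `D` passes from `⟪·, ·⟫` to
`⟪A ·, ·⟫`. The second identity holds because `A X = λ X`. -/

/-- A Lie algebra bracket on a real inner product space: a bilinear, alternating
map satisfying the Jacobi (Leibniz) identity. -/
structure LieBracketOn (g : Type*) [NormedAddCommGroup g] [InnerProductSpace ℝ g] where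
  br : g →ₗ[ℝ] g →ₗ[ℝ] g
  alt : ∀ x : g, br x x = 0
  jacobi : ∀ x y z : g, br x (br y z) = br (br x y) z + br y (br x z)

namespace Submodule

variable {E : Type*} [NormedAddCommGroup E] [InnerProductSpace ℝ E]

theorem sup_inf_orthogonal_eq_of_le_orthogonal {m₁ m₂ : Submodule ℝ E} (h : m₂ ≤ m₁ᗮ) :
    (m₁ ⊔ m₂) ⊓ m₁ᗮ = m₂ := by
  rw [sup_comm, sup_inf_assoc_of_le m₁ h, inf_orthogonal_eq_bot, sup_bot_eq]

theorem mapsTo_right_of_skew_of_mapsTo_left {m₁ m₂ : Submodule ℝ E} (horth : m₂ ≤ m₁ᗮ)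
    {D : E →ₗ[ℝ] E} (hmaps : Set.MapsTo D m₂ ↑(m₁ ⊔ m₂))
    (hskew : ∀ y ∈ m₁ ⊔ m₂, ∀ z ∈ m₁ ⊔ m₂, ⟪D y, z⟫ + ⟪D z, y⟫ = 0)
    (h₁ : Set.MapsTo D m₁ m₁) : Set.MapsTo D m₂ m₂ := by
  intro b hb
  have hperp : D b ∈ m₁ᗮ := by
    rw [mem_orthogonal']
    intro a ha
    have := hskew b (mem_sup_right hb) a (mem_sup_left ha)
    rwa [inner_right_of_mem_orthogonal (h₁ ha) (horth hb), add_zero] at this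
  rw [← sup_inf_orthogonal_eq_of_le_orthogonal horth]
  exact ⟨hmaps hb, hperp⟩

variable (m₁ m₂ : Submodule ℝ E) [m₁.HasOrthogonalProjection] [m₂.HasOrthogonalProjection]
  (lam : ℝ)

/-- On `m₁ ⊔ m₂` this is `y₁ + y₂ ↦ y₁ + lam • y₂`; the paper's `⟨y, z⟩_λ` is
`⟪deformation m₁ m₂ lam y, z⟫`. -/
noncomputable def deformation : E →L[ℝ] E :=
  m₁.starProjection + lam • m₂.starProjection

variable {m₁ m₂ lam}

theorem deformation_apply (y : E) :
    deformation m₁ m₂ lam y = m₁.starProjection y + lam • m₂.starProjection y :=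
  rfl

theorem inner_deformation_left (y z : E) :
    ⟪deformation m₁ m₂ lam y, z⟫ =
      ⟪m₁.starProjection y, m₁.starProjection z⟫
        + lam * ⟪m₂.starProjection y, m₂.starProjection z⟫ := by
  simp only [deformation_apply, inner_add_left, inner_smul_left, RCLike.conj_to_real,
    inner_starProjection_left_eq_right,
    starProjection_eq_self_iff.mpr (starProjection_apply_mem _ _)]

theorem inner_deformation_comm (y z : E) :
    ⟪deformation m₁ m₂ lam y, z⟫ = ⟪y, deformation m₁ m₂ lam z⟫ := by
  rw [real_inner_comm (deformation m₁ m₂ lam z) y, inner_deformation_left,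
    inner_deformation_left, real_inner_comm (m₁.starProjection z),
    real_inner_comm (m₂.starProjection z)]

theorem deformation_apply_mem (y : E) : deformation m₁ m₂ lam y ∈ m₁ ⊔ m₂ :=
  add_mem (mem_sup_left (starProjection_apply_mem _ _))
    (mem_sup_right (smul_mem _ _ (starProjection_apply_mem _ _)))

theorem deformation_apply_of_mem_left (horth : m₁ ≤ m₂ᗮ) {y : E} (hy : y ∈ m₁) :
    deformation m₁ m₂ lam y = y := by
  rw [deformation_apply, starProjection_eq_self_iff.mpr hy,
    (starProjection_apply_eq_zero_iff _).mpr (horth hy), smul_zero, add_zero]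

theorem deformation_apply_of_mem_right (horth : m₁ ≤ m₂ᗮ) {y : E} (hy : y ∈ m₂) :
    deformation m₁ m₂ lam y = lam • y := by
  rw [deformation_apply, starProjection_eq_self_iff.mpr hy,
    (starProjection_apply_eq_zero_iff _).mpr (le_orthogonal_iff_le_orthogonal.mp horth hy),
    zero_add]

theorem deformation_apply_comm (horth : m₁ ≤ m₂ᗮ) {D : E →ₗ[ℝ] E}
    (h₁ : Set.MapsTo D m₁ m₁) (h₂ : Set.MapsTo D m₂ m₂) {y : E} (hy : y ∈ m₁ ⊔ m₂) :
    deformation m₁ m₂ lam (D y) = D (deformation m₁ m₂ lam y) := by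
  obtain ⟨a, ha, b, hb, rfl⟩ := mem_sup.mp hy
  rw [map_add, map_add, map_add, deformation_apply_of_mem_left horth ha,
    deformation_apply_of_mem_left horth (h₁ ha), deformation_apply_of_mem_right horth hb,
    deformation_apply_of_mem_right horth (h₂ hb), map_add, map_smul]

theorem inner_deformation_skew (horth : m₁ ≤ m₂ᗮ) {D : E →ₗ[ℝ] E}
    (hskew : ∀ y ∈ m₁ ⊔ m₂, ∀ z ∈ m₁ ⊔ m₂, ⟪D y, z⟫ + ⟪D z, y⟫ = 0)
    (h₁ : Set.MapsTo D m₁ m₁) (h₂ : Set.MapsTo D m₂ m₂) {y z : E}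
    (hy : y ∈ m₁ ⊔ m₂) (hz : z ∈ m₁ ⊔ m₂) :
    ⟪deformation m₁ m₂ lam (D y), z⟫ + ⟪deformation m₁ m₂ lam (D z), y⟫ = 0 := by
  rw [deformation_apply_comm horth h₁ h₂ hy, inner_deformation_comm (D z)]
  exact hskew _ (deformation_apply_mem y) z hz

end Submodule

open Submodule in
theorem stmt_4_general {g : Type*} [NormedAddCommGroup g] [InnerProductSpace ℝ g]
    [FiniteDimensional ℝ g] (L : LieBracketOn g)
    (m₁ m₂ : Submodule ℝ g) (horth : m₁ ≤ m₂ᗮ)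
    (m : Submodule ℝ g) (hm : m = m₁ ⊔ m₂)
    (lam : ℝ)
    (innerlam : g → g → ℝ)
    (hinnerlam : ∀ y z : g, innerlam y z =
      ⟪(m₁.orthogonalProjectionOnto y : g), (m₁.orthogonalProjectionOnto z : g)⟫
        + lam * ⟪(m₂.orthogonalProjectionOnto y : g), (m₂.orthogonalProjectionOnto z : g)⟫)
    (X : g) (hX : X ∈ m₂)
    (hB1 : ∀ y z : g, y ∈ m → z ∈ m →
      ⟪(m.orthogonalProjectionOnto (L.br y X) : g), z⟫
        + ⟪(m.orthogonalProjectionOnto (L.br z X) : g), y⟫ = 0)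
    (hB2 : ∀ y z : g, y ∈ m → z ∈ m →
      ⟪(m.orthogonalProjectionOnto (L.br y z) : g), X⟫ = 0)
    (hm1X : ∀ y₁ ∈ m₁, (m.orthogonalProjectionOnto (L.br y₁ X) : g) ∈ m₁) :
    ∀ y z : g, y ∈ m → z ∈ m →
      (innerlam (m.orthogonalProjectionOnto (L.br y X) : g) z
          + innerlam (m.orthogonalProjectionOnto (L.br z X) : g) y = 0
        ∧ innerlam (m.orthogonalProjectionOnto (L.br y z) : g) X = 0) := by
  subst hm
  obtain rfl : innerlam = fun y z => ⟪deformation m₁ m₂ lam y, z⟫ := by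
    ext y z
    rw [hinnerlam, inner_deformation_left]
    rfl
  let D : g →ₗ[ℝ] g := (m₁ ⊔ m₂).starProjection.toLinearMap ∘ₗ L.br.flip X
  have hskew : ∀ y ∈ m₁ ⊔ m₂, ∀ z ∈ m₁ ⊔ m₂, ⟪D y, z⟫ + ⟪D z, y⟫ = 0 :=
    fun y hy z hz => hB1 y z hy hz
  have hD₁ : Set.MapsTo D m₁ m₁ := fun y hy => hm1X y hy
  have hD₂ : Set.MapsTo D m₂ m₂ :=
    mapsTo_right_of_skew_of_mapsTo_left (le_orthogonal_iff_le_orthogonal.mp horth)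
      (fun y _ => starProjection_apply_mem _ _) hskew hD₁
  intro y z hy hz
  refine ⟨inner_deformation_skew horth hskew hD₁ hD₂ hy hz, ?_⟩
  beta_reduce
  rw [inner_deformation_comm, deformation_apply_of_mem_right horth hX, inner_smul_right,
    hB2 y z hy hz, mul_zero]

/-- The Berwald condition for `X ∈ m₂` is preserved under the one-parameter
deformation `⟨·,·⟩_λ` of the inner product, given `[m₁, m₂] ⊆ m₁`. -/
theorem stmt_4 {g : Type*} [NormedAddCommGroup g] [InnerProductSpace ℝ g]
    [FiniteDimensional ℝ g] (L : LieBracketOn g)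
    (m₁ m₂ : Submodule ℝ g) (horth : m₁ ≤ m₂ᗮ)
    (m : Submodule ℝ g) (hm : m = m₁ ⊔ m₂)
    (hbr : ∀ u ∈ m₁, ∀ v ∈ m₂, (m.orthogonalProjectionOnto (L.br u v) : g) ∈ m₁)
    (lam : ℝ) (hlam : 0 < lam)
    (innerlam : g → g → ℝ)
    (hinnerlam : ∀ y z : g, innerlam y z =
      ⟪(m₁.orthogonalProjectionOnto y : g), (m₁.orthogonalProjectionOnto z : g)⟫
        + lam * ⟪(m₂.orthogonalProjectionOnto y : g), (m₂.orthogonalProjectionOnto z : g)⟫)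
    (X : g) (hX : X ∈ m₂)
    (hB1 : ∀ y z : g, y ∈ m → z ∈ m →
      ⟪(m.orthogonalProjectionOnto (L.br y X) : g), z⟫
        + ⟪(m.orthogonalProjectionOnto (L.br z X) : g), y⟫ = 0)
    (hB2 : ∀ y z : g, y ∈ m → z ∈ m →
      ⟪(m.orthogonalProjectionOnto (L.br y z) : g), X⟫ = 0)
    (hm1X : ∀ y₁ ∈ m₁, (m.orthogonalProjectionOnto (L.br y₁ X) : g) ∈ m₁) :
    ∀ y z : g, y ∈ m → z ∈ m →
      (innerlam (m.orthogonalProjectionOnto (L.br y X) : g) z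
          + innerlam (m.orthogonalProjectionOnto (L.br z X) : g) y = 0
        ∧ innerlam (m.orthogonalProjectionOnto (L.br y z) : g) X = 0) :=
  stmt_4_general L m₁ m₂ horth m hm lam innerlam hinnerlam X hX hB1 hB2 hm1X
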